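/- arXiv:2501.09603 — 4 statements merged into one kernel-verified Lean document; each statement's English description precedes it below -/
import Mathlib

section
/- Let X ⊂ ℝ^d be relatively separated, s > d, and H a Hilbert space. If A = [A_{k,l}]_{k,l∈X} is a B(H)-valued matrix with ‖A‖_{J_s} := sup_{k,l∈X} ‖A_{k,l}‖(1+|k−l|)^s < ∞, then A defines a bounded operator on ℓ^1(X;H) with ‖A‖_{B(ℓ^1)} ≤ C‖A‖_{J_s} for a constant C depending only on X and s. -/
/-!
Schur's test: a matrix whose columns have operator-norm sums at most `C` acts on `ℓ¹` with norm
at most `C`. Under Jaffard decay the column sums are bounded by `M ∑_{k ∈ X} (1 + |k - l|)^{-s}`,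
which is bounded uniformly in `l`: sorting the points `k` by the lattice cell `⌊k - l⌋ ∈ ℤ^d`,
each cell contains at most `N` points by relative separation, and
`(1 + |t|)^{-s} ≤ 2^s ∏ᵢ (1 + |⌊tᵢ⌋|)^{-p}` with `p = (1 + s) / (1 + d) > 1` reduces the sum over
cells to a product of `d` convergent one-dimensional series.
-/

open scoped BigOperators

noncomputable section

abbrev E (d : ℕ) := EuclideanSpace ℝ (Fin d)

/-- `X ⊂ ℝ^d` is relatively separated: the number of points of `X` in any
translated unit cube is uniformly bounded. -/
def RelSep {d : ℕ} (X : Set (E d)) : Prop :=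
  ∃ N : ℕ, ∀ x : E d,
    (X ∩ {y | ∀ i, x i ≤ y i ∧ y i ≤ x i + 1}).Finite ∧
    (X ∩ {y | ∀ i, x i ≤ y i ∧ y i ≤ x i + 1}).ncard ≤ N

open Finset

theorem schur_test_l1 {𝕜 ι κ V W : Type*} [NontriviallyNormedField 𝕜]
    [SeminormedAddCommGroup V] [NormedSpace 𝕜 V] [NormedAddCommGroup W] [NormedSpace 𝕜 W]
    [CompleteSpace W] (A : κ → ι → V →L[𝕜] W) {C : ℝ}
    (hcol : ∀ l, Summable (fun k => ‖A k l‖)) (hC : ∀ l, ∑' k, ‖A k l‖ ≤ C)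
    (g : ι → V) (hg : Summable (fun l => ‖g l‖)) :
    (∀ k, Summable (fun l => A k l (g l))) ∧
      Summable (fun k => ‖∑' l, A k l (g l)‖) ∧
      ∑' k, ‖∑' l, A k l (g l)‖ ≤ C * ∑' l, ‖g l‖ := by
  set w : κ → ι → ℝ := fun k l => ‖A k l‖ * ‖g l‖
  have hw : ∀ k l, 0 ≤ w k l := fun k l => mul_nonneg (norm_nonneg _) (norm_nonneg _)
  have hcolw : ∀ l, ∑' k, w k l ≤ C * ‖g l‖ := fun l => by
    simp only [w, tsum_mul_right]
    exact mul_le_mul_of_nonneg_right (hC l) (norm_nonneg _)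
  have hprod : Summable (fun p : ι × κ => w p.2 p.1) := by
    refine (summable_prod_of_nonneg fun p => hw p.2 p.1).2
      ⟨fun l => (hcol l).mul_right ‖g l‖, ?_⟩
    exact (hg.mul_left C).of_nonneg_of_le (fun l => tsum_nonneg fun k => hw k l) hcolw
  have hrow : ∀ k, Summable (w k) := hprod.prod_symm.prod_factor
  have happly : ∀ k l, ‖A k l (g l)‖ ≤ w k l := fun k l => (A k l).le_opNorm (g l)
  have hrow' : ∀ k, Summable (fun l => ‖A k l (g l)‖) := fun k =>
    (hrow k).of_nonneg_of_le (fun _ => norm_nonneg _) (happly k)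
  have hnorm : ∀ k, ‖∑' l, A k l (g l)‖ ≤ ∑' l, w k l := fun k =>
    (norm_tsum_le_tsum_norm (hrow' k)).trans ((hrow' k).tsum_le_tsum (happly k) (hrow k))
  have hsum : Summable (fun k => ∑' l, w k l) := hprod.prod_symm.prod
  refine ⟨fun k => (hrow' k).of_norm, hsum.of_nonneg_of_le (fun _ => norm_nonneg _) hnorm, ?_⟩
  calc ∑' k, ‖∑' l, A k l (g l)‖ ≤ ∑' k, ∑' l, w k l :=
        (hsum.of_nonneg_of_le (fun _ => norm_nonneg _) hnorm).tsum_le_tsum hnorm hsum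
    _ = ∑' l, ∑' k, w k l := hprod.prod_symm.tsum_comm.symm
    _ ≤ ∑' l, C * ‖g l‖ := (hprod.prod).tsum_le_tsum hcolw (hg.mul_left C)
    _ = C * ∑' l, ‖g l‖ := tsum_mul_left

theorem summable_one_add_abs_int_rpow_neg {p : ℝ} (hp : 1 < p) :
    Summable (fun m : ℤ => (1 + |(m : ℝ)|) ^ (-p)) := by
  -- unlike `|m|`, `|m + 1/2|` never vanishes, so the comparison holds for every `m`
  refine ((Real.summable_one_div_int_add_rpow (1 / 2) p).2 hp).of_nonneg_of_le
    (fun m => by positivity) fun m => ?_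
  have hpos : 0 < |(m : ℝ) + 1 / 2| := by
    refine abs_pos.2 fun h => ?_
    have : (2 * m + 1 : ℤ) = 0 := by exact_mod_cast (by linarith : (2 * m + 1 : ℝ) = 0)
    omega
  rw [Real.rpow_neg (by positivity), one_div]
  gcongr
  exact (abs_add_le _ _).trans (by rw [add_comm]; norm_num)

theorem summable_pi_prod {ι β : Type*} [Fintype ι] {f : β → ℝ} (hf0 : ∀ b, 0 ≤ f b)
    (hf : Summable f) : Summable (fun n : ι → β => ∏ i, f (n i)) := by
  classical
  refine summable_of_sum_le (c := (∑' b, f b) ^ Fintype.card ι)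
    (fun n => prod_nonneg fun i _ => hf0 _) fun u => ?_
  calc ∑ n ∈ u, ∏ i, f (n i)
      ≤ ∑ n ∈ Fintype.piFinset (fun i => u.image (· i)), ∏ i, f (n i) :=
        sum_le_sum_of_subset_of_nonneg
          (fun n hn => Fintype.mem_piFinset.2 fun i => mem_image_of_mem _ hn)
          (fun n _ _ => prod_nonneg fun i _ => hf0 _)
    _ = ∏ i, ∑ b ∈ u.image (· i), f b := (prod_univ_sum _ _).symm
    _ ≤ ∏ _i : ι, ∑' b, f b :=
        prod_le_prod (fun i _ => sum_nonneg fun b _ => hf0 b)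
          fun i _ => hf.sum_le_tsum _ fun b _ => hf0 b
    _ = (∑' b, f b) ^ Fintype.card ι := by rw [prod_const, card_univ]

theorem summable_comp_and_tsum_comp_le_of_card_fiber_le {α β : Type*} [DecidableEq β]
    {φ : α → β} {f : β → ℝ} (N : ℕ) (hf0 : ∀ b, 0 ≤ f b) (hf : Summable f)
    (hφ : ∀ (u : Finset α) (b : β), #{a ∈ u | φ a = b} ≤ N) :
    Summable (f ∘ φ) ∧ ∑' a, f (φ a) ≤ N * ∑' b, f b := by
  have hpartial : ∀ u : Finset α, ∑ a ∈ u, f (φ a) ≤ N * ∑' b, f b := fun u =>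
    calc ∑ a ∈ u, f (φ a) = ∑ b ∈ u.image φ, #{a ∈ u | φ a = b} • f b := sum_comp f φ
      _ ≤ ∑ b ∈ u.image φ, N * f b := sum_le_sum fun b _ => by
          rw [nsmul_eq_mul]; exact mul_le_mul_of_nonneg_right (by exact_mod_cast hφ u b) (hf0 b)
      _ = N * ∑ b ∈ u.image φ, f b := (mul_sum _ _ _).symm
      _ ≤ N * ∑' b, f b := mul_le_mul_of_nonneg_left
          (hf.sum_le_tsum _ fun b _ => hf0 b) N.cast_nonneg
  have hsum : Summable (f ∘ φ) := summable_of_sum_le (fun a => hf0 (φ a)) hpartial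
  exact ⟨hsum, hsum.tsum_le_of_sum_le hpartial⟩

theorem one_add_abs_floor_le (x : ℝ) : 1 + |(⌊x⌋ : ℝ)| ≤ 2 * (1 + |x|) := by
  have h1 : (⌊x⌋ : ℝ) ≤ x := Int.floor_le x
  have h2 : x - 1 < ⌊x⌋ := Int.sub_one_lt_floor x
  have h3 : |(⌊x⌋ : ℝ)| ≤ |x| + 1 :=
    abs_le.2 ⟨by linarith [neg_abs_le x], by linarith [le_abs_self x]⟩
  linarith [abs_nonneg x]

theorem one_add_norm_rpow_neg_le_prod_floor {d : ℕ} {p s : ℝ} (hp : 0 ≤ p) (hps : p * d ≤ s)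
    (t : E d) : (1 + ‖t‖) ^ (-s) ≤ 2 ^ s * ∏ i, (1 + |(⌊t i⌋ : ℝ)|) ^ (-p) := by
  set a : ℝ := 2 * (1 + ‖t‖)
  have ha : 1 ≤ a := by have := norm_nonneg t; linarith
  have hfac : ∀ i, a ^ (-p) ≤ (1 + |(⌊t i⌋ : ℝ)|) ^ (-p) := fun i => by
    have hti : |t i| ≤ ‖t‖ := by simpa only [Real.norm_eq_abs] using PiLp.norm_apply_le t i
    exact Real.rpow_le_rpow_of_nonpos (by positivity)
      ((one_add_abs_floor_le _).trans (by simp only [a]; gcongr)) (neg_nonpos.2 hp)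
  calc (1 + ‖t‖) ^ (-s) = 2 ^ s * a ^ (-s) := by
        rw [Real.mul_rpow zero_le_two (by positivity), ← mul_assoc, ← Real.rpow_add two_pos,
          add_neg_cancel, Real.rpow_zero, one_mul]
    _ ≤ 2 ^ s * a ^ (-p * d) :=
        mul_le_mul_of_nonneg_left (Real.rpow_le_rpow_of_exponent_le ha (by linarith))
          (by positivity)
    _ = 2 ^ s * ∏ _i : Fin d, a ^ (-p) := by
        rw [prod_const, card_univ, Fintype.card_fin, Real.rpow_mul (by positivity),
          Real.rpow_natCast]
    _ ≤ 2 ^ s * ∏ i, (1 + |(⌊t i⌋ : ℝ)|) ^ (-p) :=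
        mul_le_mul_of_nonneg_left (prod_le_prod (fun i _ => by positivity) fun i _ => hfac i)
          (by positivity)

theorem RelSep.exists_card_filter_floor_sub_eq_le {d : ℕ} {X : Set (E d)} (hX : RelSep X) :
    ∃ N : ℕ, ∀ (l : E d) (u : Finset X) (n : Fin d → ℤ),
      #(u.filter fun k : X => (fun i => ⌊(k : E d) i - l i⌋) = n) ≤ N := by
  obtain ⟨N, hN⟩ := hX
  refine ⟨N, fun l u n => ?_⟩
  set x : E d := WithLp.toLp 2 (fun i => l i + n i)
  obtain ⟨hfin, hcard⟩ := hN x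
  have hcube : ∀ k ∈ u.filter fun k : X => (fun i => ⌊(k : E d) i - l i⌋) = n,
      (k : E d) ∈ hfin.toFinset := fun k hk => by
    have hfl : ∀ i, ⌊(k : E d) i - l i⌋ = n i := fun i => congrFun (mem_filter.1 hk).2 i
    refine hfin.mem_toFinset.2 ⟨k.2, fun i => ?_⟩
    have h1 := Int.floor_le ((k : E d) i - l i)
    have h2 := Int.lt_floor_add_one ((k : E d) i - l i)
    rw [hfl i] at h1 h2
    simp only [x]
    constructor <;> linarith
  calc #(u.filter fun k : X => (fun i => ⌊(k : E d) i - l i⌋) = n) ≤ #hfin.toFinset :=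
        card_le_card_of_injOn _ hcube Subtype.val_injective.injOn
    _ ≤ N := (Set.ncard_eq_toFinset_card _ hfin).symm ▸ hcard

theorem RelSep.exists_tsum_one_add_norm_sub_rpow_neg_le {d : ℕ} {X : Set (E d)} (hX : RelSep X)
    {s : ℝ} (hs : (d : ℝ) < s) :
    ∃ C > (0 : ℝ), ∀ l : E d,
      Summable (fun k : X => (1 + ‖(k : E d) - l‖) ^ (-s)) ∧
      ∑' k : X, (1 + ‖(k : E d) - l‖) ^ (-s) ≤ C := by
  obtain ⟨N, hN⟩ := hX.exists_card_filter_floor_sub_eq_le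
  set p : ℝ := (1 + s) / (1 + d)
  have hd : (0 : ℝ) < 1 + d := by positivity
  have hp : 1 < p := (one_lt_div hd).2 (by linarith)
  have hps : p * d ≤ s := by
    rw [div_mul_eq_mul_div, div_le_iff₀ hd]; nlinarith
  set F : (Fin d → ℤ) → ℝ := fun n => 2 ^ s * ∏ i, (1 + |((n i : ℤ) : ℝ)|) ^ (-p)
  have hF0 : ∀ n, 0 ≤ F n := fun n => by positivity
  have hF : Summable F :=
    (summable_pi_prod (fun m => by positivity) (summable_one_add_abs_int_rpow_neg hp)).mul_left _
  refine ⟨N * ∑' n, F n + 1, by positivity, fun l => ?_⟩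
  obtain ⟨hsum, hle⟩ := summable_comp_and_tsum_comp_le_of_card_fiber_le
    (φ := fun (k : X) i => ⌊(k : E d) i - l i⌋) N hF0 hF (hN l)
  have hpt : ∀ k : X, (1 + ‖(k : E d) - l‖) ^ (-s) ≤ F (fun i => ⌊(k : E d) i - l i⌋) :=
    fun k => one_add_norm_rpow_neg_le_prod_floor (by linarith) hps _
  refine ⟨hsum.of_nonneg_of_le (fun k => by positivity) hpt, ?_⟩
  calc ∑' k : X, (1 + ‖(k : E d) - l‖) ^ (-s) ≤ ∑' k : X, F (fun i => ⌊(k : E d) i - l i⌋) :=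
        (hsum.of_nonneg_of_le (fun k => by positivity) hpt).tsum_le_tsum hpt hsum
    _ ≤ N * ∑' n, F n := hle
    _ ≤ N * ∑' n, F n + 1 := by linarith

theorem le_mul_rpow_neg_of_mul_rpow_le {a b M s : ℝ} (hb : 0 < b) (h : a * b ^ s ≤ M) :
    a ≤ M * b ^ (-s) := by
  rwa [Real.rpow_neg hb.le, ← div_eq_mul_inv, le_div_iff₀ (Real.rpow_pos_of_pos hb s)]

theorem stmt3 {d : ℕ} (X : Set (E d)) (hX : RelSep X) (s : ℝ) (hs : (d : ℝ) < s)
    (H : Type*) [NormedAddCommGroup H] [InnerProductSpace ℂ H] [CompleteSpace H] :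
    ∃ C > (0 : ℝ), ∀ (A : X → X → H →L[ℂ] H) (M : ℝ),
      (∀ k l : X, ‖A k l‖ * (1 + ‖(k : E d) - (l : E d)‖) ^ s ≤ M) →
      ∀ g : X → H, Summable (fun l : X => ‖g l‖) →
        (∀ k : X, Summable (fun l : X => A k l (g l))) ∧
        Summable (fun k : X => ‖∑' l : X, A k l (g l)‖) ∧
        ∑' k : X, ‖∑' l : X, A k l (g l)‖ ≤ C * M * ∑' l : X, ‖g l‖ := by
  obtain ⟨C, hC, hlat⟩ := hX.exists_tsum_one_add_norm_sub_rpow_neg_le hs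
  refine ⟨C, hC, fun A M hM g hg => ?_⟩
  have hA : ∀ k l : X, ‖A k l‖ ≤ M * (1 + ‖(k : E d) - l‖) ^ (-s) := fun k l =>
    le_mul_rpow_neg_of_mul_rpow_le (by positivity) (hM k l)
  have hcol : ∀ l : X, Summable (fun k => ‖A k l‖) := fun l =>
    ((hlat l).1.mul_left M).of_nonneg_of_le (fun _ => norm_nonneg _) fun k => hA k l
  refine schur_test_l1 A hcol (fun l => ?_) g hg
  have hM0 : 0 ≤ M := (mul_nonneg (norm_nonneg _) (by positivity)).trans (hM l l)
  calc ∑' k, ‖A k l‖ ≤ ∑' k : X, M * (1 + ‖(k : E d) - l‖) ^ (-s) :=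
        (hcol l).tsum_le_tsum (fun k => hA k l) ((hlat l).1.mul_left M)
    _ = M * ∑' k : X, (1 + ‖(k : E d) - l‖) ^ (-s) := tsum_mul_left
    _ ≤ M * C := mul_le_mul_of_nonneg_left (hlat l).2 hM0
    _ = C * M := mul_comm M C
end
end

section
/- Let X ⊂ ℝ^d be relatively separated and s > d. Then the Jaffard class J_s is closed under matrix multiplication: there exists a constant C > 0 such that ‖A·B‖_{J_s} ≤ C‖A‖_{J_s}‖B‖_{J_s} for all A,B ∈ J_s, where (A·B)_{k,l} = Σ_{n∈X} A_{k,n}B_{n,l} (the series converging in operator norm). -/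
/-!
Peetre's inequality `(1 + |k - l|)^s ≤ 2^s ((1 + |k - n|)^s + (1 + |n - l|)^s)` bounds each term
`‖A k n‖ ‖B n l‖ (1 + |k - l|)^s` by `2^s MA MB ((1 + |n - l|)^(-s) + (1 + |k - n|)^(-s))`, so
everything reduces to a bound on `∑_{n ∈ X} (1 + |k - n|)^(-s)` uniform in `k`. Rounding `n - k`
down to the lattice `ℤ^d` is at most `N`-to-one, since `X` is relatively separated, and changes
the weight by at most a factor `2^s`; this compares the sum with `∑_{m ∈ ℤ^d} (1 + |m|_∞)^(-s)`,
which converges for `s > d` because it is dominated by the product of the one-dimensional series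
`∑_{j ∈ ℤ} (1 + |j|)^(-s/d)`.
-/

open scoped BigOperators

noncomputable section

namespace Real

lemma add_rpow_le_two_rpow_mul_rpow_add_rpow {a b p : ℝ} (ha : 0 ≤ a) (hb : 0 ≤ b) (hp : 0 ≤ p) :
    (a + b) ^ p ≤ 2 ^ p * (a ^ p + b ^ p) := calc
  (a + b) ^ p ≤ (2 * max a b) ^ p := by
    rw [two_mul]; gcongr
    exacts [le_max_left a b, le_max_right a b]
  _ = 2 ^ p * max a b ^ p := mul_rpow zero_le_two (le_max_of_le_left ha)
  _ ≤ 2 ^ p * (a ^ p + b ^ p) := by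
    gcongr
    rcases le_total a b with h | h
    · rw [max_eq_right h]; exact le_add_of_nonneg_left (by positivity)
    · rw [max_eq_left h]; exact le_add_of_nonneg_right (by positivity)

end Real

lemma summable_fin_pi_prod {ι : Type*} {f : ι → ℝ} (hf0 : 0 ≤ f) (hf : Summable f) :
    ∀ d : ℕ, Summable fun m : Fin d → ι => ∏ i, f (m i)
  | 0 => .of_finite
  | d + 1 => by
    refine (Fin.consEquiv fun _ : Fin (d + 1) => ι).summable_iff.mp ?_
    refine (hf.mul_of_nonneg (summable_fin_pi_prod hf0 hf d) hf0 fun _ => ?_).congr fun p => ?_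
    · exact Finset.prod_nonneg fun i _ => hf0 _
    · simp [Fin.consEquiv, Fin.prod_univ_succ]

lemma summable_one_add_norm_int_rpow_neg {t : ℝ} (ht : 1 < t) :
    Summable fun n : ℤ => (1 + ‖n‖) ^ (-t) := by
  have hnat : Summable fun n : ℕ => ((n + 1 : ℕ) : ℝ) ^ (-t) :=
    (summable_nat_add_iff 1).mpr (Real.summable_nat_rpow.mpr (by linarith))
  refine .of_nat_of_neg (hnat.congr fun n => ?_) (hnat.congr fun n => ?_) <;>
    simp [add_comm]

lemma summable_one_add_norm_rpow_neg {d : ℕ} {s : ℝ} (hs : (d : ℝ) < s) :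
    Summable fun m : Fin d → ℤ => (1 + ‖m‖) ^ (-s) := by
  rcases Nat.eq_zero_or_pos d with rfl | hd
  · exact .of_finite
  have hd' : (0 : ℝ) < d := Nat.cast_pos.mpr hd
  set t := s / d
  have ht : 1 < t := (one_lt_div hd').mpr hs
  refine .of_nonneg_of_le (fun m => by positivity) (fun m => ?_) <|
    summable_fin_pi_prod (fun n => by positivity) (summable_one_add_norm_int_rpow_neg ht) d
  calc (1 + ‖m‖) ^ (-s) = ((1 + ‖m‖) ^ d) ^ (-t) := by
        rw [← Real.rpow_natCast, ← Real.rpow_mul (by positivity), mul_neg,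
          mul_div_cancel₀ s hd'.ne']
    _ ≤ (∏ i, (1 + ‖m i‖)) ^ (-t) := by
        refine Real.rpow_le_rpow_of_nonpos (by positivity) ?_ (by linarith)
        simpa using Finset.prod_le_prod (s := Finset.univ) (f := fun i => 1 + ‖m i‖)
          (g := fun _ => 1 + ‖m‖)
          (fun i _ => by positivity) fun i _ => by gcongr; exact norm_le_pi_norm m i
    _ = ∏ i, (1 + ‖m i‖) ^ (-t) := (Real.finsetProd_rpow _ _ (fun i _ => by positivity) _).symm

section FiberCounting

variable {α β : Type*} {π : α → β} {N : ℕ} {g : β → ℝ}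

lemma sum_comp_le_of_encard_fiber_le (hπ : ∀ b, (π ⁻¹' {b}).encard ≤ N) (hg0 : 0 ≤ g)
    (hg : Summable g) (u : Finset α) : ∑ a ∈ u, g (π a) ≤ N * ∑' b, g b := by
  classical
  have hcard : ∀ b, (u.filter (π · = b)).card ≤ N := fun b => by
    have : ((u.filter (π · = b) : Finset α) : Set α).encard ≤ N :=
      (Set.encard_le_encard fun a ha => by simpa using (Finset.mem_filter.mp ha).2).trans (hπ b)
    exact_mod_cast (Set.encard_coe_eq_coe_finsetCard _).symm.trans_le this
  calc ∑ a ∈ u, g (π a) = ∑ b ∈ u.image π, (u.filter (π · = b)).card • g b := Finset.sum_comp g π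
    _ ≤ ∑ b ∈ u.image π, N * g b := by
        gcongr with b
        rw [nsmul_eq_mul]
        gcongr
        · exact hg0 b
        · exact_mod_cast hcard b
    _ ≤ N * ∑' b, g b := by
        rw [← Finset.mul_sum]
        gcongr
        exact hg.sum_le_tsum _ fun b _ => hg0 b

lemma Summable.comp_of_encard_fiber_le (hπ : ∀ b, (π ⁻¹' {b}).encard ≤ N) (hg0 : 0 ≤ g)
    (hg : Summable g) : Summable (g ∘ π) :=
  summable_of_sum_le (fun a => hg0 (π a)) fun u => sum_comp_le_of_encard_fiber_le hπ hg0 hg u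

lemma tsum_comp_le_of_encard_fiber_le (hπ : ∀ b, (π ⁻¹' {b}).encard ≤ N) (hg0 : 0 ≤ g)
    (hg : Summable g) : ∑' a, g (π a) ≤ N * ∑' b, g b :=
  (hg.comp_of_encard_fiber_le hπ hg0).tsum_le_of_sum_le (sum_comp_le_of_encard_fiber_le hπ hg0 hg)

end FiberCounting

lemma one_add_norm_floor_le {d : ℕ} (x : E d) :
    1 + ‖(fun i => ⌊x i⌋ : Fin d → ℤ)‖ ≤ 2 * (1 + ‖x‖) := by
  suffices ‖(fun i => ⌊x i⌋ : Fin d → ℤ)‖ ≤ ‖x‖ + 1 by linarith [norm_nonneg x]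
  refine (pi_norm_le_iff_of_nonneg (by positivity)).mpr fun i => ?_
  have hxi : |x i| ≤ ‖x‖ := by simpa using PiLp.norm_apply_le x i
  rw [Int.norm_eq_abs, abs_le]
  constructor <;>
    linarith [Int.floor_le (x i), Int.sub_one_lt_floor (x i), abs_le.mp hxi]

lemma RelSep.exists_encard_le {d : ℕ} {X : Set (E d)} (hX : RelSep X) :
    ∃ N : ℕ, ∀ x : E d, (X ∩ {y | ∀ i, x i ≤ y i ∧ y i ≤ x i + 1}).encard ≤ N := by
  obtain ⟨N, hN⟩ := hX
  exact ⟨N, fun x => (hN x).1.cast_ncard_eq ▸ Nat.cast_le.mpr (hN x).2⟩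

theorem RelSep.exists_forall_tsum_one_add_norm_sub_rpow_neg_le {d : ℕ} {X : Set (E d)}
    (hX : RelSep X) {s : ℝ} (hs : (d : ℝ) < s) :
    ∃ C > (0 : ℝ), ∀ k : E d,
      Summable (fun n : X => (1 + ‖k - n‖) ^ (-s)) ∧ ∑' n : X, (1 + ‖k - n‖) ^ (-s) ≤ C := by
  obtain ⟨N, hN⟩ := hX.exists_encard_le
  set g : (Fin d → ℤ) → ℝ := fun m => (1 + ‖m‖) ^ (-s)
  have hg0 : 0 ≤ g := fun m => by positivity
  have hg : Summable g := summable_one_add_norm_rpow_neg hs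
  refine ⟨N * 2 ^ s * ∑' m, g m + 1, by positivity, fun k => ?_⟩
  set π : X → (Fin d → ℤ) := fun n i => ⌊((n : E d) - k) i⌋
  have hfiber : ∀ m, (π ⁻¹' {m}).encard ≤ N := fun m => by
    refine (Subtype.val_injective.encard_image _).symm.trans_le <| (Set.encard_le_encard ?_).trans
      (hN (WithLp.toLp 2 fun i => k i + m i))
    rintro _ ⟨n, hn, rfl⟩
    refine ⟨n.2, fun i => ?_⟩
    have hni : ⌊(n : E d) i - k i⌋ = m i := by simpa [π] using congrFun hn i
    constructor <;> linarith [Int.floor_le ((n : E d) i - k i),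
      Int.lt_floor_add_one ((n : E d) i - k i), (Int.cast_inj (α := ℝ)).mpr hni]
  have hle : ∀ n : X, (1 + ‖k - n‖) ^ (-s) ≤ 2 ^ s * g (π n) := fun n => calc
    (1 + ‖k - n‖) ^ (-s) = 2 ^ s * (2 * (1 + ‖(n : E d) - k‖)) ^ (-s) := by
      rw [Real.mul_rpow zero_le_two (by positivity), Real.rpow_neg zero_le_two, norm_sub_rev,
        ← mul_assoc, mul_inv_cancel₀ (by positivity), one_mul]
    _ ≤ 2 ^ s * g (π n) := by
      gcongr
      exact Real.rpow_le_rpow_of_nonpos (by positivity) (one_add_norm_floor_le _) (by linarith)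
  have hgπ : Summable (g ∘ π) := hg.comp_of_encard_fiber_le hfiber hg0
  have hsum : Summable fun n : X => (1 + ‖k - n‖) ^ (-s) :=
    .of_nonneg_of_le (fun n => by positivity) hle (hgπ.mul_left _)
  refine ⟨hsum, ?_⟩
  calc ∑' n : X, (1 + ‖k - n‖) ^ (-s) ≤ ∑' n, 2 ^ s * g (π n) :=
        hsum.tsum_le_tsum hle (hgπ.mul_left _)
    _ = 2 ^ s * ∑' n, g (π n) := tsum_mul_left
    _ ≤ 2 ^ s * (N * ∑' m, g m) := by gcongr; exact tsum_comp_le_of_encard_fiber_le hfiber hg0 hg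
    _ ≤ N * 2 ^ s * ∑' m, g m + 1 := by linarith

lemma mul_mul_rpow_le_of_le_add {s a b c x y Mx My : ℝ} (hs : 0 ≤ s) (ha : 0 < a) (hb : 0 < b)
    (hc0 : 0 ≤ c) (hc : c ≤ a + b) (hx : 0 ≤ x) (hy : 0 ≤ y) (hxa : x * a ^ s ≤ Mx)
    (hyb : y * b ^ s ≤ My) :
    x * y * c ^ s ≤ 2 ^ s * Mx * My * (a ^ (-s) + b ^ (-s)) := by
  have hx' : x ≤ Mx * a ^ (-s) := by
    rwa [Real.rpow_neg ha.le, ← div_eq_mul_inv, le_div_iff₀ (by positivity)]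
  have hy' : y ≤ My * b ^ (-s) := by
    rwa [Real.rpow_neg hb.le, ← div_eq_mul_inv, le_div_iff₀ (by positivity)]
  have hMx : 0 ≤ Mx := (by positivity : 0 ≤ x * a ^ s).trans hxa
  have hMy : 0 ≤ My := (by positivity : 0 ≤ y * b ^ s).trans hyb
  calc x * y * c ^ s ≤ x * y * (2 ^ s * (a ^ s + b ^ s)) := by
        gcongr
        exact (Real.rpow_le_rpow hc0 hc hs).trans
          (Real.add_rpow_le_two_rpow_mul_rpow_add_rpow ha.le hb.le hs)
    _ = 2 ^ s * (x * a ^ s * y + x * (y * b ^ s)) := by ring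
    _ ≤ 2 ^ s * (Mx * (My * b ^ (-s)) + Mx * a ^ (-s) * My) := by gcongr
    _ = 2 ^ s * Mx * My * (a ^ (-s) + b ^ (-s)) := by ring

lemma summable_and_norm_tsum_mul_le {ι F : Type*} [NormedAddCommGroup F] [CompleteSpace F]
    {f : ι → F} {u : ι → ℝ} {c : ℝ} (hc : 1 ≤ c) (hu : Summable u) (hfu : ∀ i, ‖f i‖ * c ≤ u i) :
    Summable f ∧ ‖∑' i, f i‖ * c ≤ ∑' i, u i := by
  have hf : Summable (‖f ·‖) := hu.of_nonneg_of_le (fun _ => norm_nonneg _) fun i =>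
    (le_mul_of_one_le_right (norm_nonneg _) hc).trans (hfu i)
  refine ⟨hf.of_norm, ?_⟩
  calc ‖∑' i, f i‖ * c ≤ (∑' i, ‖f i‖) * c := by gcongr; exact norm_tsum_le_tsum_norm hf
    _ = ∑' i, ‖f i‖ * c := tsum_mul_right.symm
    _ ≤ ∑' i, u i := (hf.mul_right c).tsum_le_tsum hfu hu

theorem stmt6 {d : ℕ} (X : Set (E d)) (hX : RelSep X) (s : ℝ) (hs : (d : ℝ) < s)
    (H : Type*) [NormedAddCommGroup H] [InnerProductSpace ℂ H] [CompleteSpace H] :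
    ∃ C > (0 : ℝ), ∀ (A B : X → X → H →L[ℂ] H) (MA MB : ℝ),
      (∀ k l : X, ‖A k l‖ * (1 + ‖(k : E d) - (l : E d)‖) ^ s ≤ MA) →
      (∀ k l : X, ‖B k l‖ * (1 + ‖(k : E d) - (l : E d)‖) ^ s ≤ MB) →
      ∀ k l : X,
        Summable (fun n : X => (A k n).comp (B n l)) ∧
        ‖∑' n : X, (A k n).comp (B n l)‖ * (1 + ‖(k : E d) - (l : E d)‖) ^ s
          ≤ C * MA * MB := by
  have hs0 : 0 ≤ s := (Nat.cast_nonneg d).trans hs.le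
  obtain ⟨C₀, hC₀, hX⟩ := hX.exists_forall_tsum_one_add_norm_sub_rpow_neg_le hs
  refine ⟨2 ^ s * (2 * C₀), by positivity, fun A B MA MB hA hB k l => ?_⟩
  have hMA : 0 ≤ MA := (mul_nonneg (norm_nonneg _) (by positivity)).trans (hA k k)
  have hMB : 0 ≤ MB := (mul_nonneg (norm_nonneg _) (by positivity)).trans (hB k k)
  set a := fun n : X => (1 + ‖(k : E d) - n‖) ^ (-s)
  set b := fun n : X => (1 + ‖(l : E d) - n‖) ^ (-s)
  have hpoint : ∀ n : X, ‖(A k n).comp (B n l)‖ * (1 + ‖(k : E d) - l‖) ^ s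
      ≤ 2 ^ s * MA * MB * (a n + b n) := fun n => by
    have htri : 1 + ‖(k : E d) - l‖ ≤ (1 + ‖(k : E d) - n‖) + (1 + ‖(l : E d) - n‖) := by
      linarith [norm_sub_le_norm_sub_add_norm_sub (k : E d) n l, norm_sub_rev (n : E d) l]
    calc _ ≤ ‖A k n‖ * ‖B n l‖ * (1 + ‖(k : E d) - l‖) ^ s := by
          gcongr; exact (A k n).opNorm_comp_le (B n l)
      _ ≤ _ := mul_mul_rpow_le_of_le_add hs0 (by positivity) (by positivity) (by positivity) htri
          (norm_nonneg _) (norm_nonneg _) (hA k n) (by simpa only [norm_sub_rev] using hB n l)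
  obtain ⟨hsum, hle⟩ := summable_and_norm_tsum_mul_le
    (Real.one_le_rpow (le_add_of_nonneg_right (norm_nonneg _)) hs0)
    (((hX k).1.add (hX l).1).mul_left _) hpoint
  refine ⟨hsum, hle.trans ?_⟩
  rw [tsum_mul_left, (hX k).1.tsum_add (hX l).1]
  calc 2 ^ s * MA * MB * (∑' n, a n + ∑' n, b n) ≤ 2 ^ s * MA * MB * (C₀ + C₀) := by
        gcongr
        exacts [(hX k).2, (hX l).2]
    _ = 2 ^ s * (2 * C₀) * MA * MB := by ring
end
end

section
/- Let X ⊂ ℝ^d be relatively separated, s > d, and γ = 1 − d/s > 0. Then there exists a constant C > 0 such that for every A in the Jaffard class J_s: ‖A²‖_{J_s} ≤ C ‖A‖_{J_s}^{2−γ} ‖A‖_{B(ℓ²(X;H))}^{γ}. -/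
open scoped BigOperators

noncomputable section

/-!
Write `⟨x⟩ = 1 + |x|`. Every entry satisfies `‖A k l‖ ≤ ‖A‖` and `‖A k l‖ ≤ ‖A‖_J ⟨k - l⟩^(-s)`,
and for every `n` one of `|k - n|`, `|n - l|` is at least `|k - l| / 2`, so
`‖(A²) k l‖ ⟨k - l⟩^s ≤ 2^s ‖A‖_J ∑_{c ∈ {k, l}} ∑_n min(‖A‖, ‖A‖_J ⟨n - c⟩^(-s))`.
Relative separation puts `O((1 + r)^d)` points of `X` in a ball of radius `r`. Splitting the sum
over `n` at `|n - c| = τ = (‖A‖_J / ‖A‖)^(1/s)`, the near part is `O(‖A‖ τ^d)` and, summing over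
dyadic shells, the far part is `O(‖A‖_J τ^(d - s))`; both equal `‖A‖_J^(d/s) ‖A‖^(1 - d/s)`.
-/

open Finset

def BallCountBound (ι : Type*) [PseudoMetricSpace ι] (d : ℕ) (N : ℝ) : Prop :=
  ∀ (c : ι) (r : ℝ) (u : Finset ι), 0 ≤ r → (∀ n ∈ u, dist n c ≤ r) → (#u : ℝ) ≤ N * (1 + r) ^ d

theorem RelSep.exists_ballCountBound {d : ℕ} {X : Set (E d)} (hX : RelSep X) :
    ∃ N > 0, BallCountBound X d N := by
  obtain ⟨N, hN⟩ := hX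
  refine ⟨(N + 1) * 2 ^ d, by positivity, fun c r u hr hu => ?_⟩
  have hcoord : ∀ n ∈ u, ∀ i, |(n : E d) i - (c : E d) i| ≤ r := fun n hn i =>
    (PiLp.dist_apply_le (n : E d) c i).trans (hu n hn)
  let corner : X → Fin d → ℕ := fun y i => ⌊(y : E d) i - ((c : E d) i - r)⌋₊
  have hfiber : ∀ b ∈ u.image corner, #{y ∈ u | corner y = b} ≤ N := by
    intro b _
    let x : E d := WithLp.toLp 2 fun i => (c : E d) i - r + b i
    have hsub : (({y ∈ u | corner y = b}.map (Function.Embedding.subtype _) : Finset (E d)) :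
        Set (E d)) ⊆ X ∩ {y | ∀ i, x i ≤ y i ∧ y i ≤ x i + 1} := by
      simp only [coe_map, Function.Embedding.coe_subtype, coe_filter, Set.image_subset_iff]
      rintro y ⟨hy, rfl⟩
      refine ⟨y.2, fun i => ?_⟩
      have h0 : 0 ≤ (y : E d) i - ((c : E d) i - r) := by linarith [(abs_le.1 (hcoord y hy i)).1]
      have h1 := Nat.floor_le h0
      have h2 := Nat.lt_floor_add_one ((y : E d) i - ((c : E d) i - r))
      simp only [x, corner]
      constructor <;> linarith
    calc #{y ∈ u | corner y = b}
        = (({y ∈ u | corner y = b}.map (Function.Embedding.subtype _) : Finset (E d)) :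
            Set (E d)).ncard := by rw [Set.ncard_coe_finset, card_map]
      _ ≤ (X ∩ {y | ∀ i, x i ≤ y i ∧ y i ≤ x i + 1}).ncard := Set.ncard_le_ncard hsub (hN x).1
      _ ≤ N := (hN x).2
  have himage : u.image corner ⊆ Fintype.piFinset fun _ => range (⌊2 * r⌋₊ + 1) := by
    simp only [subset_iff, mem_image, Fintype.mem_piFinset, mem_range, Nat.lt_succ_iff]
    rintro _ ⟨y, hy, rfl⟩ i
    exact Nat.floor_mono (by linarith [(abs_le.1 (hcoord y hy i)).2])
  have hcard : #u ≤ N * (⌊2 * r⌋₊ + 1) ^ d := calc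
    #u ≤ N * #(u.image corner) := card_le_mul_card_image u N hfiber
    _ ≤ N * #(Fintype.piFinset fun _ : Fin d => range (⌊2 * r⌋₊ + 1)) := by gcongr
    _ = N * (⌊2 * r⌋₊ + 1) ^ d := by simp
  calc (#u : ℝ) ≤ N * (⌊2 * r⌋₊ + 1 : ℕ) ^ d := by exact_mod_cast hcard
    _ ≤ (N + 1) * (2 * (1 + r)) ^ d := by
      gcongr
      · linarith
      · push_cast
        linarith [Nat.floor_le (by linarith : 0 ≤ 2 * r)]
    _ = (N + 1) * 2 ^ d * (1 + r) ^ d := by rw [mul_pow]; ring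

theorem min_mul_max_pow_le {d : ℕ} {s K τ : ℝ} (hK : 0 ≤ K) (hτ : 0 < τ) (hds : (d : ℝ) ≤ s) :
    min K (K * τ ^ s) * max 1 τ ^ d ≤ K * τ ^ (d : ℝ) := by
  rcases le_total τ 1 with h | h
  · rw [max_eq_left h, one_pow, mul_one]
    exact (min_le_right _ _).trans
      (mul_le_mul_of_nonneg_left (Real.rpow_le_rpow_of_exponent_ge hτ h hds) hK)
  · rw [max_eq_right h, ← Real.rpow_natCast]
    exact mul_le_mul_of_nonneg_right (min_le_left _ _) (by positivity)

theorem inv_one_sub_two_rpow_pos {x : ℝ} (hx : x < 0) : 0 < (1 - (2 : ℝ) ^ x)⁻¹ :=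
  inv_pos.2 (sub_pos.2 (Real.rpow_lt_one_of_one_lt_of_neg one_lt_two hx))

theorem mul_two_pow_log_floor_div_le_and_lt {a t : ℝ} (ha : 0 < a) (hat : a ≤ t) :
    a * 2 ^ Nat.log 2 ⌊t / a⌋₊ ≤ t ∧ t < a * 2 ^ (Nat.log 2 ⌊t / a⌋₊ + 1) := by
  have h1 : 1 ≤ t / a := (one_le_div ha).2 hat
  have hm : ⌊t / a⌋₊ ≠ 0 := (Nat.floor_pos.2 h1).ne'
  have hlo : ((2 ^ Nat.log 2 ⌊t / a⌋₊ : ℕ) : ℝ) ≤ t / a :=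
    (Nat.cast_le.2 (Nat.pow_log_le_self 2 hm)).trans (Nat.floor_le (by linarith))
  have hhi : t / a < ((2 ^ (Nat.log 2 ⌊t / a⌋₊ + 1) : ℕ) : ℝ) :=
    (Nat.lt_floor_add_one _).trans_le (by exact_mod_cast Nat.lt_pow_succ_log_self one_lt_two _)
  push_cast at hlo hhi
  exact ⟨(le_div_iff₀' ha).1 hlo, (div_lt_iff₀' ha).1 hhi⟩

namespace BallCountBound

variable {ι : Type*} [PseudoMetricSpace ι] {d : ℕ} {N s : ℝ}

theorem one_le (hN : BallCountBound ι d N) (c : ι) : 1 ≤ N := by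
  simpa using hN c 0 {c} le_rfl (by simp)

theorem sum_rpow_neg_le (hN : BallCountBound ι d N) (hs : (d : ℝ) < s) (c : ι) {a : ℝ}
    (ha : 1 ≤ a) (u : Finset ι) (hu : ∀ n ∈ u, a ≤ 1 + dist n c) :
    ∑ n ∈ u, (1 + dist n c) ^ (-s)
      ≤ N * 2 ^ d * (1 - 2 ^ ((d : ℝ) - s))⁻¹ * a ^ ((d : ℝ) - s) := by
  set q : ℝ := 2 ^ ((d : ℝ) - s)
  have hq0 : 0 ≤ q := by positivity
  have hq1 : q < 1 := Real.rpow_lt_one_of_one_lt_of_neg one_lt_two (by linarith)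
  have ha0 : 0 < a := by linarith
  have hN0 : 0 ≤ N := by linarith [hN.one_le c]
  let shell : ι → ℕ := fun n => Nat.log 2 ⌊(1 + dist n c) / a⌋₊
  have hshell : ∀ j, ∑ n ∈ u with shell n = j, (1 + dist n c) ^ (-s)
      ≤ N * 2 ^ d * a ^ ((d : ℝ) - s) * q ^ j := by
    intro j
    have hb : 0 < a * 2 ^ j := by positivity
    have hcard : (#{n ∈ u | shell n = j} : ℝ) ≤ N * (a * 2 ^ (j + 1)) ^ d := by
      have := hN c (a * 2 ^ (j + 1) - 1) {n ∈ u | shell n = j}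
        (by nlinarith [(one_le_pow₀ one_le_two : (1 : ℝ) ≤ 2 ^ (j + 1))]) fun n hn => by
          obtain ⟨hnu, rfl⟩ := mem_filter.1 hn
          linarith [(mul_two_pow_log_floor_div_le_and_lt ha0 (hu n hnu)).2]
      simpa using this
    calc ∑ n ∈ u with shell n = j, (1 + dist n c) ^ (-s)
        ≤ ∑ n ∈ u with shell n = j, (a * 2 ^ j) ^ (-s) := by
          refine sum_le_sum fun n hn => ?_
          obtain ⟨hnu, rfl⟩ := mem_filter.1 hn
          exact Real.rpow_le_rpow_of_nonpos hb
            (mul_two_pow_log_floor_div_le_and_lt ha0 (hu n hnu)).1 (by linarith)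
      _ = #{n ∈ u | shell n = j} * (a * 2 ^ j) ^ (-s) := by rw [sum_const, nsmul_eq_mul]
      _ ≤ N * (a * 2 ^ (j + 1)) ^ d * (a * 2 ^ j) ^ (-s) := by gcongr
      _ = N * 2 ^ d * ((a * 2 ^ j) ^ (d : ℝ) * (a * 2 ^ j) ^ (-s)) := by
          rw [Real.rpow_natCast]; ring
      _ = N * 2 ^ d * a ^ ((d : ℝ) - s) * q ^ j := by
          rw [← Real.rpow_add hb, ← sub_eq_add_neg, Real.mul_rpow ha0.le (by positivity),
            ← Real.rpow_pow_comm zero_le_two]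
          ring
  calc ∑ n ∈ u, (1 + dist n c) ^ (-s)
      = ∑ j ∈ range (u.sup shell + 1), ∑ n ∈ u with shell n = j, (1 + dist n c) ^ (-s) :=
        (sum_fiberwise_of_maps_to (fun n hn => mem_range_succ_iff.2 (le_sup hn)) _).symm
    _ ≤ ∑ j ∈ range (u.sup shell + 1), N * 2 ^ d * a ^ ((d : ℝ) - s) * q ^ j :=
        sum_le_sum fun j _ => hshell j
    _ = N * 2 ^ d * a ^ ((d : ℝ) - s) * ∑ j ∈ range (u.sup shell + 1), q ^ j := by
        rw [mul_sum]
    _ ≤ N * 2 ^ d * a ^ ((d : ℝ) - s) * (1 - q)⁻¹ := by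
        refine mul_le_mul_of_nonneg_left ?_ (by positivity)
        have := geom_sum_Ico_le_of_lt_one (m := 0) (n := u.sup shell + 1) hq0 hq1
        rwa [← range_eq_Ico, pow_zero, one_div] at this
    _ = N * 2 ^ d * (1 - q)⁻¹ * a ^ ((d : ℝ) - s) := by ring

theorem sum_min_rpow_le (hN : BallCountBound ι d N) (hs : (d : ℝ) < s) (c : ι) {K τ : ℝ}
    (hK : 0 ≤ K) (hτ : 0 < τ) (u : Finset ι) :
    ∑ n ∈ u, min K (K * τ ^ s * (1 + dist n c) ^ (-s))
      ≤ N * (1 + 2 ^ d * (1 - 2 ^ ((d : ℝ) - s))⁻¹) * (K * τ ^ (d : ℝ)) := by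
  have hN0 : 0 ≤ N := by linarith [hN.one_le c]
  have hq := inv_one_sub_two_rpow_pos (x := (d : ℝ) - s) (by linarith)
  set a := max 1 τ
  have hfar : ∑ n ∈ u with a ≤ 1 + dist n c, min K (K * τ ^ s * (1 + dist n c) ^ (-s))
      ≤ N * 2 ^ d * (1 - 2 ^ ((d : ℝ) - s))⁻¹ * (K * τ ^ (d : ℝ)) := calc
    _ ≤ ∑ n ∈ u with a ≤ 1 + dist n c, K * τ ^ s * (1 + dist n c) ^ (-s) :=
        sum_le_sum fun _ _ => min_le_right _ _
    _ = K * τ ^ s * ∑ n ∈ u with a ≤ 1 + dist n c, (1 + dist n c) ^ (-s) := by rw [mul_sum]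
    _ ≤ K * τ ^ s * (N * 2 ^ d * (1 - 2 ^ ((d : ℝ) - s))⁻¹ * τ ^ ((d : ℝ) - s)) := by
        refine mul_le_mul_of_nonneg_left ?_ (by positivity)
        refine (hN.sum_rpow_neg_le hs c (le_max_left _ _) _ fun n hn =>
          (mem_filter.1 hn).2).trans ?_
        exact mul_le_mul_of_nonneg_left
          (Real.rpow_le_rpow_of_nonpos hτ (le_max_right _ _) (by linarith)) (by positivity)
    _ = N * 2 ^ d * (1 - 2 ^ ((d : ℝ) - s))⁻¹ * (K * τ ^ (d : ℝ)) := by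
        rw [Real.rpow_sub hτ]
        field_simp
  have hnear : ∑ n ∈ u with ¬a ≤ 1 + dist n c, min K (K * τ ^ s * (1 + dist n c) ^ (-s))
      ≤ N * (K * τ ^ (d : ℝ)) := calc
    _ ≤ ∑ n ∈ u with ¬a ≤ 1 + dist n c, min K (K * τ ^ s) := by
        refine sum_le_sum fun n _ => min_le_min le_rfl ?_
        have : (1 + dist n c) ^ (-s) ≤ 1 :=
          Real.rpow_le_one_of_one_le_of_nonpos (by linarith [dist_nonneg (x := n) (y := c)])
            (by linarith)
        exact mul_le_of_le_one_right (by positivity) this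
    _ = #{n ∈ u | ¬a ≤ 1 + dist n c} * min K (K * τ ^ s) := by rw [sum_const, nsmul_eq_mul]
    _ ≤ N * a ^ d * min K (K * τ ^ s) := by
        gcongr
        simpa using hN c (a - 1) _ (by simp [a]) fun n hn => by
            linarith [(mem_filter.1 hn).2]
    _ ≤ N * (K * τ ^ (d : ℝ)) := by
        rw [mul_assoc, mul_comm (a ^ d)]
        exact mul_le_mul_of_nonneg_left (min_mul_max_pow_le hK hτ hs.le) hN0
  rw [← sum_filter_add_sum_filter_not u (fun n => a ≤ 1 + dist n c)]
  linarith

theorem summable_min_rpow_and_tsum_le (hN : BallCountBound ι d N) (hs : (d : ℝ) < s) (c : ι)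
    {K M : ℝ} (hK : 0 ≤ K) (hM : 0 ≤ M) :
    Summable (fun n => min K (M * (1 + dist n c) ^ (-s))) ∧
      ∑' n, min K (M * (1 + dist n c) ^ (-s))
        ≤ N * (1 + 2 ^ d * (1 - 2 ^ ((d : ℝ) - s))⁻¹) *
            (M ^ ((d : ℝ) / s) * K ^ (1 - (d : ℝ) / s)) := by
  have hs0 : 0 < s := (Nat.cast_nonneg d).trans_lt hs
  have hC : 0 ≤ N * (1 + 2 ^ d * (1 - (2 : ℝ) ^ ((d : ℝ) - s))⁻¹) := by
    have := inv_one_sub_two_rpow_pos (x := (d : ℝ) - s) (by linarith)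
    have := hN.one_le c
    positivity
  have hf : 0 ≤ fun n => min K (M * (1 + dist n c) ^ (-s)) := fun n => le_min hK (by positivity)
  suffices h : ∀ u : Finset ι, ∑ n ∈ u, min K (M * (1 + dist n c) ^ (-s))
      ≤ N * (1 + 2 ^ d * (1 - 2 ^ ((d : ℝ) - s))⁻¹) *
          (M ^ ((d : ℝ) / s) * K ^ (1 - (d : ℝ) / s)) from
    ⟨summable_of_sum_le hf h, Real.tsum_le_of_sum_le hf h⟩
  intro u
  obtain rfl | hK := hK.eq_or_lt
  · rw [sum_eq_zero fun n _ => min_eq_left (by positivity)]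
    exact mul_nonneg hC (by positivity)
  obtain rfl | hM := hM.eq_or_lt
  · rw [sum_eq_zero fun n _ => by rw [zero_mul, min_eq_right hK.le]]
    exact mul_nonneg hC (by positivity)
  set τ := (M / K) ^ (1 / s)
  have hτ : 0 < τ := by positivity
  have hMτ : K * τ ^ s = M := by
    rw [← Real.rpow_mul (by positivity), one_div_mul_cancel hs0.ne', Real.rpow_one]
    field_simp
  have hRτ : K * τ ^ (d : ℝ) = M ^ ((d : ℝ) / s) * K ^ (1 - (d : ℝ) / s) := by
    rw [← Real.rpow_mul (by positivity), Real.div_rpow hM.le hK.le, Real.rpow_sub hK,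
      Real.rpow_one, one_div_mul_eq_div]
    field_simp
  simpa only [hMτ, hRτ] using hN.sum_min_rpow_le hs c hK.le hτ u

end BallCountBound

theorem mul_mul_one_add_rpow_le {s M K x y D a b : ℝ} (hs : 0 ≤ s) (hx : 0 ≤ x) (hy : 0 ≤ y)
    (hD : 0 ≤ D) (hDxy : D ≤ x + y) (ha : 0 ≤ a) (haK : a ≤ K) (haM : a * (1 + x) ^ s ≤ M)
    (hb : 0 ≤ b) (hbK : b ≤ K) (hbM : b * (1 + y) ^ s ≤ M) :
    a * b * (1 + D) ^ s
      ≤ 2 ^ s * M * (min K (M * (1 + x) ^ (-s)) + min K (M * (1 + y) ^ (-s))) := by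
  wlog hyx : y ≤ x generalizing a b x y
  · simpa only [mul_comm a b, add_comm] using
      this hy hx (by linarith) hb hbK hbM ha haK haM (by linarith)
  have hM : 0 ≤ M := (by positivity : 0 ≤ a * (1 + x) ^ s).trans haM
  have hDx : (1 + D) ^ s ≤ 2 ^ s * (1 + x) ^ s := by
    rw [← Real.mul_rpow zero_le_two (by linarith)]
    exact Real.rpow_le_rpow (by linarith) (by linarith) hs
  have hbmin : b ≤ min K (M * (1 + y) ^ (-s)) := by
    refine le_min hbK ?_
    rw [Real.rpow_neg (by linarith), ← div_eq_mul_inv, le_div_iff₀ (by positivity)]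
    exact hbM
  have hxmin : 0 ≤ min K (M * (1 + x) ^ (-s)) := le_min (ha.trans haK) (by positivity)
  calc a * b * (1 + D) ^ s ≤ a * b * (2 ^ s * (1 + x) ^ s) := by gcongr
    _ = 2 ^ s * (a * (1 + x) ^ s) * b := by ring
    _ ≤ 2 ^ s * M * min K (M * (1 + y) ^ (-s)) := by gcongr
    _ ≤ 2 ^ s * M * (min K (M * (1 + x) ^ (-s)) + min K (M * (1 + y) ^ (-s))) := by
        gcongr
        exact le_add_of_nonneg_left hxmin

section Operator

variable {ι 𝕜 H : Type*} [NontriviallyNormedField 𝕜] [NormedAddCommGroup H] [NormedSpace 𝕜 H]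

theorem norm_entry_le_of_tsum_sq_le {A : ι → ι → H →L[𝕜] H} {K : ℝ} (hK : 0 ≤ K)
    (hA : ∀ g : ι → H, Summable (fun l => ‖g l‖ ^ 2) →
      Summable (fun k => ‖∑' l, A k l (g l)‖ ^ 2) ∧
        ∑' k, ‖∑' l, A k l (g l)‖ ^ 2 ≤ K ^ 2 * ∑' l, ‖g l‖ ^ 2)
    (k l : ι) : ‖A k l‖ ≤ K := by
  classical
  refine (A k l).opNorm_le_bound hK fun v => ?_
  let g : ι → H := Pi.single l v
  have hg : (fun l' => ‖g l'‖ ^ 2) = Pi.single l (‖v‖ ^ 2) :=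
    funext (Pi.apply_single (fun _ (w : H) => ‖w‖ ^ 2) (fun _ => by simp) l v)
  have hAg : ∀ k', (fun l' => A k' l' (g l')) = Pi.single l (A k' l v) := fun k' =>
    funext (Pi.apply_single (fun l' => A k' l') (fun _ => map_zero _) l v)
  obtain ⟨hsum, hle⟩ := hA g (hg ▸ (hasSum_pi_single l _).summable)
  simp only [hAg, hg, tsum_pi_single] at hsum hle
  have : ‖A k l v‖ ^ 2 ≤ (K * ‖v‖) ^ 2 := by
    rw [mul_pow]
    exact (hsum.le_tsum k fun _ _ => sq_nonneg _).trans hle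
  exact (pow_le_pow_iff_left₀ (norm_nonneg _) (by positivity) two_ne_zero).1 this

variable [PseudoMetricSpace ι] [CompleteSpace H]

theorem summable_comp_and_norm_tsum_comp_mul_le {A : ι → ι → H →L[𝕜] H} {s M K B : ℝ}
    (hs : 0 ≤ s) (hAM : ∀ k l, ‖A k l‖ * (1 + dist k l) ^ s ≤ M) (hAK : ∀ k l, ‖A k l‖ ≤ K)
    (hB : ∀ c : ι, Summable (fun n => min K (M * (1 + dist n c) ^ (-s))) ∧
      ∑' n, min K (M * (1 + dist n c) ^ (-s)) ≤ B) (k l : ι) :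
    Summable (fun n => (A k n).comp (A n l)) ∧
      ‖∑' n, (A k n).comp (A n l)‖ * (1 + dist k l) ^ s ≤ 2 ^ s * M * (2 * B) := by
  have hM : 0 ≤ M := (by positivity : 0 ≤ ‖A k l‖ * (1 + dist k l) ^ s).trans (hAM k l)
  have hpos : 0 < (1 + dist k l) ^ s := by positivity
  set G : ι → ℝ := fun n =>
    2 ^ s * M * (min K (M * (1 + dist n k) ^ (-s)) + min K (M * (1 + dist n l) ^ (-s)))
  have hG : HasSum G (2 ^ s * M * (∑' n, min K (M * (1 + dist n k) ^ (-s)) +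
      ∑' n, min K (M * (1 + dist n l) ^ (-s)))) :=
    ((hB k).1.hasSum.add (hB l).1.hasSum).mul_left _
  have hT : ∀ n, ‖(A k n).comp (A n l)‖ ≤ G n / (1 + dist k l) ^ s := by
    intro n
    rw [le_div_iff₀ hpos]
    calc ‖(A k n).comp (A n l)‖ * (1 + dist k l) ^ s
        ≤ ‖A k n‖ * ‖A n l‖ * (1 + dist k l) ^ s := by gcongr; exact (A k n).opNorm_comp_le _
      _ ≤ G n := by
        have := mul_mul_one_add_rpow_le hs dist_nonneg dist_nonneg dist_nonneg (dist_triangle k n l)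
          (norm_nonneg _) (hAK k n) (hAM k n) (norm_nonneg _) (hAK n l) (hAM n l)
        rwa [dist_comm k n] at this
  refine ⟨.of_norm_bounded (hG.summable.div_const _) hT, ?_⟩
  rw [← le_div_iff₀ hpos]
  refine (tsum_of_norm_bounded (hG.div_const _) hT).trans ?_
  gcongr
  linarith [(hB k).2, (hB l).2]

end Operator

theorem stmt18 {d : ℕ} (X : Set (E d)) (hX : RelSep X) (s : ℝ) (hs : (d : ℝ) < s)
    (H : Type*) [NormedAddCommGroup H] [InnerProductSpace ℂ H] [CompleteSpace H] :
    ∃ C > (0 : ℝ), ∀ (A : X → X → H →L[ℂ] H) (M K : ℝ), 0 ≤ M → 0 ≤ K →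
      (∀ k l : X, ‖A k l‖ * (1 + ‖(k : E d) - (l : E d)‖) ^ s ≤ M) →
      (∀ g : X → H, Summable (fun l : X => ‖g l‖ ^ 2) →
        (∀ k : X, Summable (fun l : X => A k l (g l))) ∧
        Summable (fun k : X => ‖∑' l : X, A k l (g l)‖ ^ 2) ∧
        ∑' k : X, ‖∑' l : X, A k l (g l)‖ ^ 2 ≤ K ^ 2 * ∑' l : X, ‖g l‖ ^ 2) →
      ∀ k l : X,
        Summable (fun n : X => (A k n).comp (A n l)) ∧
        ‖∑' n : X, (A k n).comp (A n l)‖ * (1 + ‖(k : E d) - (l : E d)‖) ^ s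
          ≤ C * M ^ (2 - (1 - (d : ℝ) / s)) * K ^ (1 - (d : ℝ) / s) := by
  obtain ⟨N, hN0, hN⟩ := hX.exists_ballCountBound
  have hs0 : 0 < s := (Nat.cast_nonneg d).trans_lt hs
  have hq := inv_one_sub_two_rpow_pos (x := (d : ℝ) - s) (by linarith)
  refine ⟨2 ^ s * 2 * (N * (1 + 2 ^ d * (1 - 2 ^ ((d : ℝ) - s))⁻¹)), by positivity, ?_⟩
  intro A M K hM hK hAM hop k l
  have hAK : ∀ k l, ‖A k l‖ ≤ K := norm_entry_le_of_tsum_sq_le hK fun g hg => (hop g hg).2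
  simp only [← dist_eq_norm, ← Subtype.dist_eq] at hAM ⊢
  refine (summable_comp_and_norm_tsum_comp_mul_le hs0.le hAM hAK
    (fun c => hN.summable_min_rpow_and_tsum_le hs c hK hM) k l).imp_right fun h => h.trans_eq ?_
  rw [show 2 - (1 - (d : ℝ) / s) = 1 + d / s by ring, Real.rpow_add' hM (by positivity),
    Real.rpow_one]
  ring
end
end

section
/- Let A ⊆ B be unital Banach algebras with common identity, with continuous inclusion, and suppose there exist C > 0 and 0 < γ ≤ 1 such that ‖A²‖_A ≤ C‖A‖_A^{2−γ}‖A‖_B^{γ} for all A ∈ A. Then r_A(A) ≤ r_B(A) for all A ∈ A (Brandenburg's trick). -/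
open Filter Topology

lemma stmt19_aux {D : Type*} [NormedRing D] [NormedAlgebra ℂ D] [CompleteSpace D] (d : D)
    (hd : spectralRadius ℂ d ≠ ⊤) :
    Filter.Tendsto (fun n : ℕ => ‖d ^ n‖ ^ (1 / n : ℝ)) Filter.atTop
      (nhds (spectralRadius ℂ d).toReal) := by
  have h1 := spectrum.pow_norm_pow_one_div_tendsto_nhds_spectralRadius d
  have h2 := (ENNReal.tendsto_toReal hd).comp h1
  refine h2.congr fun n => ?_
  simp only [Function.comp_apply, ENNReal.toReal_ofReal
    (Real.rpow_nonneg (norm_nonneg _) _)]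

theorem stmt19 {A B : Type*}
    [NormedRing A] [NormedAlgebra ℂ A] [CompleteSpace A] [NormOneClass A]
    [NormedRing B] [NormedAlgebra ℂ B] [CompleteSpace B] [NormOneClass B]
    (φ : A →ₐ[ℂ] B) (K : ℝ) (hφ : ∀ a : A, ‖φ a‖ ≤ K * ‖a‖)
    (C γ : ℝ) (hC : 0 < C) (hγ0 : 0 < γ) (hγ1 : γ ≤ 1)
    (h : ∀ a : A, ‖a ^ 2‖ ≤ C * ‖a‖ ^ (2 - γ) * ‖φ a‖ ^ γ) (a : A) :
    spectralRadius ℂ a ≤ spectralRadius ℂ (φ a) := by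
  set L := spectralRadius ℂ a with hL
  set M := spectralRadius ℂ (φ a) with hM
  have hLtop : L ≠ ⊤ := ((spectrum.spectralRadius_le_nnnorm (𝕜:=ℂ) a).trans_lt ENNReal.coe_lt_top).ne
  have hMtop : M ≠ ⊤ :=
    ((spectrum.spectralRadius_le_nnnorm (𝕜:=ℂ) (φ a)).trans_lt ENNReal.coe_lt_top).ne
  set l := L.toReal with hl
  set m := M.toReal with hm
  have hl0 : 0 ≤ l := ENNReal.toReal_nonneg
  have hm0 : 0 ≤ m := ENNReal.toReal_nonneg
  -- real-valued Gelfand limits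
  have hfa : Tendsto (fun n : ℕ => ‖a ^ n‖ ^ (1 / n : ℝ)) atTop (𝓝 l) := stmt19_aux a hLtop
  have hfb : Tendsto (fun n : ℕ => ‖(φ a) ^ n‖ ^ (1 / n : ℝ)) atTop (𝓝 m) := stmt19_aux (φ a) hMtop
  have h2n : Tendsto (fun n : ℕ => 2 * n) atTop atTop :=
    tendsto_atTop_atTop_of_monotone (fun i j hij => by omega) (fun b => ⟨b, by omega⟩)
  -- limit of the RHS
  have hCγ : Tendsto (fun n : ℕ => C ^ (1 / ((2 * n : ℕ) : ℝ))) atTop (𝓝 1) := by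
    have he : Tendsto (fun n : ℕ => 1 / ((2 * n : ℕ) : ℝ)) atTop (𝓝 0) :=
      tendsto_one_div_atTop_nhds_zero_nat.comp h2n
    have hcont : Tendsto (fun y : ℝ => C ^ y) (𝓝 0) (𝓝 1) := by
      have := (Real.continuousAt_const_rpow (a := C) (b := 0) hC.ne').tendsto
      simpa [Real.rpow_zero] using this
    exact hcont.comp he
  have hfal : Tendsto (fun n : ℕ => (‖a ^ n‖ ^ (1 / n : ℝ)) ^ ((2 - γ) / 2)) atTop
      (𝓝 (l ^ ((2 - γ) / 2))) :=
    ((Real.continuousAt_rpow_const l ((2 - γ) / 2) (Or.inr (by linarith))).tendsto).comp hfa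
  have hfbm : Tendsto (fun n : ℕ => (‖(φ a) ^ n‖ ^ (1 / n : ℝ)) ^ (γ / 2)) atTop
      (𝓝 (m ^ (γ / 2))) :=
    ((Real.continuousAt_rpow_const m (γ / 2) (Or.inr (by linarith))).tendsto).comp hfb
  have hRHS : Tendsto (fun n : ℕ => C ^ (1 / ((2 * n : ℕ) : ℝ)) *
      (‖a ^ n‖ ^ (1 / n : ℝ)) ^ ((2 - γ) / 2) * (‖(φ a) ^ n‖ ^ (1 / n : ℝ)) ^ (γ / 2))
      atTop (𝓝 (1 * l ^ ((2 - γ) / 2) * m ^ (γ / 2))) :=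
    (hCγ.mul hfal).mul hfbm
  have hLHS : Tendsto (fun n : ℕ => ‖a ^ (2 * n)‖ ^ (1 / ((2 * n : ℕ) : ℝ))) atTop (𝓝 l) :=
    hfa.comp h2n
  -- eventual pointwise inequality
  have hev : ∀ᶠ n : ℕ in atTop, ‖a ^ (2 * n)‖ ^ (1 / ((2 * n : ℕ) : ℝ)) ≤
      C ^ (1 / ((2 * n : ℕ) : ℝ)) * (‖a ^ n‖ ^ (1 / n : ℝ)) ^ ((2 - γ) / 2) *
      (‖(φ a) ^ n‖ ^ (1 / n : ℝ)) ^ (γ / 2) := by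
    filter_upwards [eventually_ge_atTop 1] with n hn
    have hn0 : (0 : ℝ) < (n : ℝ) := by exact_mod_cast hn
    have hbase := h (a ^ n)
    rw [← pow_mul, map_pow] at hbase
    have hnn : (0 : ℝ) ≤ 1 / ((2 * n : ℕ) : ℝ) := by positivity
    have := Real.rpow_le_rpow (norm_nonneg _) hbase hnn
    rw [mul_comm n 2] at this
    refine this.trans_eq ?_
    have e1 : (2 - γ) * (1 / ((2 * n : ℕ) : ℝ)) = (1 / (n : ℝ)) * ((2 - γ) / 2) := by
      push_cast
      field_simp
      try ring
      try tauto
    have e2 : γ * (1 / ((2 * n : ℕ) : ℝ)) = (1 / (n : ℝ)) * (γ / 2) := by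
      push_cast
      field_simp
      try ring
      try tauto
    rw [Real.mul_rpow (by positivity) (Real.rpow_nonneg (norm_nonneg _) _),
      Real.mul_rpow hC.le (Real.rpow_nonneg (norm_nonneg _) _),
      ← Real.rpow_mul (norm_nonneg _), ← Real.rpow_mul (norm_nonneg _), e1, e2,
      Real.rpow_mul (norm_nonneg _), Real.rpow_mul (norm_nonneg _)]
  have hmain : l ≤ 1 * l ^ ((2 - γ) / 2) * m ^ (γ / 2) :=
    le_of_tendsto_of_tendsto hLHS hRHS hev
  rw [one_mul] at hmain
  -- deduce l ≤ m
  have hlm : l ≤ m := by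
    rcases eq_or_lt_of_le hl0 with h0 | hlpos
    · linarith
    have hsplit : l = l ^ ((2 - γ) / 2) * l ^ (γ / 2) := by
      rw [← Real.rpow_add hlpos, show (2 - γ) / 2 + γ / 2 = 1 by ring, Real.rpow_one]
    have hfac : (0 : ℝ) < l ^ ((2 - γ) / 2) := Real.rpow_pos_of_pos hlpos _
    have hpow : l ^ (γ / 2) ≤ m ^ (γ / 2) := by
      have h2 : l ^ ((2 - γ) / 2) * l ^ (γ / 2) ≤ l ^ ((2 - γ) / 2) * m ^ (γ / 2) := by
        rw [← hsplit]; exact hmain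
      exact le_of_mul_le_mul_left h2 hfac
    have := Real.rpow_le_rpow (Real.rpow_nonneg hl0 _) hpow (by positivity : (0:ℝ) ≤ 2 / γ)
    rwa [← Real.rpow_mul hl0, ← Real.rpow_mul hm0,
      div_mul_div_comm, mul_comm γ 2, div_self (by positivity), Real.rpow_one,
      Real.rpow_one] at this
  exact (ENNReal.toReal_le_toReal hLtop hMtop).mp hlm
end
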